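/- arXiv:1708.00611 — 6 statements merged into one kernel-verified Lean document; each statement's English description precedes it below -/
import Mathlib

section
/- Let k ≥ 2 be an integer and define W_k(x) = Σ_{i=1}^{k} x^i/i and R_k(x) = W_k(x) − x^k. Then for every x ∈ [0,1], R_k(x) ≥ ((C_k − 1)/C_k) · W_k(x), where C_k = Σ_{i=1}^{k} 1/i is the k-th harmonic number. -/
/-! Termwise `x ^ k ≤ x ^ i` for `i ≤ k` and `x ∈ [0, 1]` gives `C_k x ^ k ≤ W_k(x)`, i.e.
`x ^ k ≤ W_k(x) / C_k`, and subtracting this from `W_k(x)` is the claim. -/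

noncomputable def harmonic' (k : ℕ) : ℝ := ∑ i ∈ Finset.Icc 1 k, (1 : ℝ) / i

noncomputable def Wpoly (k : ℕ) (x : ℝ) : ℝ := ∑ i ∈ Finset.Icc 1 k, x ^ i / i

noncomputable def Rpoly (k : ℕ) (x : ℝ) : ℝ := Wpoly k x - x ^ k

lemma harmonic'_pos {k : ℕ} (hk : 1 ≤ k) : 0 < harmonic' k :=
  Finset.sum_pos (fun i hi => by have := (Finset.mem_Icc.mp hi).1; positivity)
    ⟨1, Finset.mem_Icc.mpr ⟨le_rfl, hk⟩⟩

lemma harmonic'_mul_pow_le_Wpoly (k : ℕ) {x : ℝ} (hx₀ : 0 ≤ x) (hx₁ : x ≤ 1) :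
    harmonic' k * x ^ k ≤ Wpoly k x := by
  rw [harmonic', Wpoly, Finset.sum_mul]
  refine Finset.sum_le_sum fun i hi => ?_
  rw [one_div_mul_eq_div]
  exact div_le_div_of_nonneg_right (pow_le_pow_of_le_one hx₀ hx₁ (Finset.mem_Icc.mp hi).2)
    (Nat.cast_nonneg i)

lemma div_mul_le_sub_of_mul_le {C a w : ℝ} (hC : 0 < C) (h : C * a ≤ w) :
    (C - 1) / C * w ≤ w - a := by
  rw [div_mul_eq_mul_div, div_le_iff₀ hC]
  linarith

theorem stmt0 (k : ℕ) (hk : 2 ≤ k) :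
    ∀ x ∈ Set.Icc (0 : ℝ) 1,
      Rpoly k x ≥ ((harmonic' k - 1) / harmonic' k) * Wpoly k x := by
  rintro x ⟨hx₀, hx₁⟩
  exact div_mul_le_sub_of_mul_le (harmonic'_pos (by omega))
    (harmonic'_mul_pow_le_Wpoly k hx₀ hx₁)
end

section
/- For every integer k ≥ 2, the function f(x) = 1 − x^k/(x + x²/2 + ⋯ + x^k/k) is monotonically decreasing on (0,1]. -/
/-! Clearing denominators, `a ^ k / S(a) ≤ b ^ k / S(b)` becomes `∑ cᵢ aᵏ bⁱ ≤ ∑ cᵢ bᵏ aⁱ`,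
which holds term by term because `aᵏ bⁱ = (ab)ⁱ aᵏ⁻ⁱ ≤ (ab)ⁱ bᵏ⁻ⁱ = bᵏ aⁱ` for `i ≤ k`. -/

open Finset

lemma pow_mul_pow_le_pow_mul_pow {a b : ℝ} (ha : 0 ≤ a) (hab : a ≤ b) {i k : ℕ} (hik : i ≤ k) :
    a ^ k * b ^ i ≤ b ^ k * a ^ i := by
  obtain ⟨j, rfl⟩ := Nat.exists_eq_add_of_le hik
  have hb : 0 ≤ b := ha.trans hab
  calc a ^ (i + j) * b ^ i = (a * b) ^ i * a ^ j := by ring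
    _ ≤ (a * b) ^ i * b ^ j := by gcongr
    _ = b ^ (i + j) * a ^ i := by ring

lemma monotoneOn_pow_div_sum {s : Finset ℕ} {k : ℕ} (hs : ∀ i ∈ s, i ≤ k) {c : ℕ → ℝ}
    (hc : ∀ i ∈ s, 0 ≤ c i) :
    MonotoneOn (fun x : ℝ => x ^ k / ∑ i ∈ s, x ^ i * c i) (Set.Ici 0) := by
  intro a (ha : 0 ≤ a) b (hb : 0 ≤ b) hab
  dsimp only
  have hS_nonneg {x : ℝ} (hx : 0 ≤ x) : 0 ≤ ∑ i ∈ s, x ^ i * c i :=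
    sum_nonneg fun i hi => mul_nonneg (pow_nonneg hx i) (hc i hi)
  -- a vanishing denominator makes the left side the junk value `0`
  rcases (hS_nonneg ha).eq_or_lt with hSa | hSa
  · rw [← hSa, div_zero]
    exact div_nonneg (pow_nonneg hb k) (hS_nonneg hb)
  have hSab : ∑ i ∈ s, a ^ i * c i ≤ ∑ i ∈ s, b ^ i * c i :=
    sum_le_sum fun i hi => mul_le_mul_of_nonneg_right (pow_le_pow_left₀ ha hab i) (hc i hi)
  rw [div_le_div_iff₀ hSa (hSa.trans_le hSab), mul_sum, mul_sum]
  refine sum_le_sum fun i hi => ?_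
  calc a ^ k * (b ^ i * c i) = (a ^ k * b ^ i) * c i := by ring
    _ ≤ (b ^ k * a ^ i) * c i :=
        mul_le_mul_of_nonneg_right (pow_mul_pow_le_pow_mul_pow ha hab (hs i hi)) (hc i hi)
    _ = b ^ k * (a ^ i * c i) := by ring

theorem stmt1_general (k : ℕ) :
    AntitoneOn (fun x : ℝ => 1 - x ^ k / (∑ i ∈ Finset.Icc 1 k, x ^ i / i))
      (Set.Ioc (0 : ℝ) 1) := by
  have hmono := monotoneOn_pow_div_sum (s := Icc 1 k) (k := k) (fun i hi => (mem_Icc.1 hi).2)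
    (c := fun i => (i : ℝ)⁻¹) fun i _ => by positivity
  intro a ha b hb hab
  simp only [div_eq_mul_inv] at hmono ⊢
  exact sub_le_sub_left (hmono (Set.mem_Ici.2 ha.1.le) (Set.mem_Ici.2 hb.1.le) hab) 1

theorem stmt1 (k : ℕ) (hk : 2 ≤ k) :
    AntitoneOn (fun x : ℝ => 1 - x ^ k / (∑ i ∈ Finset.Icc 1 k, x ^ i / i))
      (Set.Ioc (0 : ℝ) 1) :=
  stmt1_general k
end

section
/- Let p_1 ≥ p_2 ≥ ⋯ ≥ p_n > 0 be positive reals with n ≥ 2. There exists a symmetric nonnegative matrix (m_{ij})_{i,j∈[n]} with m_{ii} = 0 for all i and Σ_{j} m_{ij} = p_i for all i, if and only if p_1 ≤ Σ_{i=2}^{n} p_i. -/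
/-!
Necessity: `p i = ∑ j ≠ i, m j i ≤ ∑ j ≠ i, p j`, since `m j i ≤ ∑ k, m j k = p j`.
Sufficiency: with `S := ∑ p`, every `2 p i ≤ S`. If some `2 p c = S`, the star centred at `c`
works; otherwise all `S - 2 p i > 0` and the off-diagonal part of a rank-two matrix does.
-/

open Finset

section

variable {ι : Type*} [Fintype ι] [DecidableEq ι]

/-- `M i j = p i * π i j` for a transition kernel `π` without self-loops that is reversible
with respect to the masses `p`. -/
def IsReversibleFlow (p : ι → ℝ) (M : ι → ι → ℝ) : Prop :=
  (∀ i j, M i j = M j i) ∧ (∀ i j, 0 ≤ M i j) ∧ (∀ i, M i i = 0) ∧ (∀ i, ∑ j, M i j = p i)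

lemma sum_ite_eq_zero_else (f : ι → ℝ) (i : ι) :
    ∑ j, (if i = j then 0 else f j) = ∑ j, f j - f i := by
  simp only [sum_ite, sum_const_zero, filter_ne, mem_univ, sum_erase_eq_sub, zero_add]

lemma IsReversibleFlow.le_sum_erase {p : ι → ℝ} {M : ι → ι → ℝ} (hM : IsReversibleFlow p M)
    (i : ι) : p i ≤ ∑ j ∈ univ.erase i, p j := by
  obtain ⟨hsymm, hnonneg, hdiag, hrow⟩ := hM
  calc p i = ∑ j ∈ univ.erase i, M j i := by
        rw [← hrow i, ← sum_erase _ (hdiag i)]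
        exact sum_congr rfl fun j _ => hsymm i j
    _ ≤ ∑ j ∈ univ.erase i, p j := sum_le_sum fun j _ => by
        rw [← hrow j]
        exact single_le_sum (fun k _ => hnonneg j k) (mem_univ i)

/-- With `w i = p i / (S - 2 p i)` and `T = ∑ w`, the row sums of `p i w j + w i p j` over
`j ≠ i` are `p i T + w i (S - 2 p i) = p i (1 + T)`. -/
lemma exists_isReversibleFlow_of_two_mul_lt {p : ι → ℝ} (hp : ∀ i, 0 ≤ p i)
    (h : ∀ i, 2 * p i < ∑ j, p j) : ∃ M, IsReversibleFlow p M := by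
  set S := ∑ j, p j
  set w : ι → ℝ := fun i => p i / (S - 2 * p i)
  set T := ∑ j, w j
  have hw : ∀ i, 0 ≤ w i := fun i => div_nonneg (hp i) (by linarith [h i])
  have hw_mul : ∀ i, w i * (S - 2 * p i) = p i := fun i =>
    div_mul_cancel₀ _ (by linarith [h i])
  have hT : 0 < 1 + T := by linarith [sum_nonneg fun j (_ : j ∈ univ) => hw j]
  refine ⟨fun i j => if i = j then 0 else (p i * w j + w i * p j) / (1 + T),
    fun i j => ?_, fun i j => ?_, fun i => if_pos rfl, fun i => ?_⟩
  · simp only [eq_comm (a := i)]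
    split_ifs <;> ring
  · beta_reduce
    split_ifs
    · exact le_rfl
    · exact div_nonneg (add_nonneg (mul_nonneg (hp i) (hw j)) (mul_nonneg (hw i) (hp j))) hT.le
  · rw [sum_ite_eq_zero_else, ← sum_div, sum_add_distrib, ← mul_sum, ← mul_sum,
      div_sub_div_same, div_eq_iff hT.ne']
    linear_combination hw_mul i

lemma exists_isReversibleFlow_of_two_mul_eq {p : ι → ℝ} (hp : ∀ i, 0 ≤ p i) {c : ι}
    (hc : 2 * p c = ∑ j, p j) : ∃ M, IsReversibleFlow p M := by
  refine ⟨fun i j => if i = j then 0 else if i = c then p j else if j = c then p i else 0,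
    fun i j => ?_, fun i j => ?_, fun i => if_pos rfl, fun i => ?_⟩
  · beta_reduce
    split_ifs <;> grind
  · beta_reduce
    split_ifs <;> grind
  · rw [sum_ite_eq_zero_else]
    by_cases hi : i = c
    · subst hi; simp only [↓reduceIte]; linarith
    · simp only [hi, ↓reduceIte, sum_ite_eq', mem_univ, sub_zero]

lemma le_sum_erase_iff_two_mul_le (p : ι → ℝ) (i : ι) :
    p i ≤ ∑ j ∈ univ.erase i, p j ↔ 2 * p i ≤ ∑ j, p j := by
  rw [← add_sum_erase _ _ (mem_univ i), two_mul, add_le_add_iff_left]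

theorem exists_isReversibleFlow_iff {p : ι → ℝ} (hp : ∀ i, 0 ≤ p i) :
    (∃ M, IsReversibleFlow p M) ↔ ∀ i, p i ≤ ∑ j ∈ univ.erase i, p j := by
  refine ⟨fun ⟨M, hM⟩ => hM.le_sum_erase, fun h => ?_⟩
  simp only [le_sum_erase_iff_two_mul_le] at h
  by_cases hc : ∃ c, 2 * p c = ∑ j, p j
  · obtain ⟨c, hc⟩ := hc
    exact exists_isReversibleFlow_of_two_mul_eq hp hc
  · simp only [not_exists] at hc
    exact exists_isReversibleFlow_of_two_mul_lt hp fun i => (h i).lt_of_ne (hc i)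

end

theorem stmt5 (n : ℕ) (hn : 2 ≤ n) (p : Fin n → ℝ)
    (hpos : ∀ i, 0 < p i)
    (hsort : ∀ i j : Fin n, i ≤ j → p j ≤ p i) :
    (∃ M : Fin n → Fin n → ℝ,
        (∀ i j, M i j = M j i) ∧
        (∀ i j, 0 ≤ M i j) ∧
        (∀ i, M i i = 0) ∧
        (∀ i, ∑ j, M i j = p i)) ↔
      p ⟨0, by omega⟩ ≤ ∑ i ∈ Finset.univ.erase ⟨0, by omega⟩, p i := by
  refine (exists_isReversibleFlow_iff fun i => (hpos i).le).trans ⟨fun h => h _, fun h i => ?_⟩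
  rw [le_sum_erase_iff_two_mul_le] at h ⊢
  linarith [hsort ⟨0, by omega⟩ i (Nat.zero_le i)]
end

section
/- Let X be a Binomial(m, p) random variable with p ∈ (0, 1/2). There exists N such that for all m ≥ N, with k = ⌈pm + m^{3/4}⌉, the conditional expectation satisfies E[X | X ≥ k] < 2mp. -/
/-!
For `i ≥ K` consecutive binomial weights satisfy `b (i + 1) ≤ r * b i` with
`r = p (m - K) / ((1 - p) (K + 1))`, so the tail beyond `K` is dominated by a geometric
sequence and `E[X | X ≥ K] ≤ K + r / (1 - r)²`. With `K = ⌈pm + m^{3/4}⌉` and `s = m^{1/4}`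
one has `1 - r ≥ 1 / s`, so the excess is at most `s² = √m`, while
`K + √m ≤ pm + O(m^{3/4}) < 2pm` for large `m`.
-/

open Finset

lemma sum_range_mul_pow_le {r : ℝ} (h0 : 0 ≤ r) (h1 : r < 1) (n : ℕ) :
    ∑ j ∈ range n, (j : ℝ) * r ^ j ≤ r / (1 - r) ^ 2 := by
  have hnorm : ‖r‖ < 1 := by rwa [Real.norm_eq_abs, abs_of_nonneg h0]
  have hsum : Summable (fun j : ℕ => (j : ℝ) * r ^ j) := by
    simpa using summable_pow_mul_geometric_of_norm_lt_one 1 hnorm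
  calc ∑ j ∈ range n, (j : ℝ) * r ^ j
      ≤ ∑' j : ℕ, (j : ℝ) * r ^ j := hsum.sum_le_tsum _ fun j _ => by positivity
    _ = r / (1 - r) ^ 2 := tsum_coe_mul_geometric_of_norm_lt_one hnorm

section GeometricDecay

variable {b : ℕ → ℝ} {r : ℝ} {K m : ℕ}

lemma le_mul_pow_of_succ_le (hr : 0 ≤ r) (hstep : ∀ i, K ≤ i → i < m → b (i + 1) ≤ r * b i)
    {j : ℕ} (hj : K + j ≤ m) : b (K + j) ≤ b K * r ^ j := by
  induction j with
  | zero => simp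
  | succ n ih =>
    calc b (K + (n + 1)) ≤ r * b (K + n) := hstep (K + n) (by omega) (by omega)
      _ ≤ r * (b K * r ^ n) := mul_le_mul_of_nonneg_left (ih (by omega)) hr
      _ = b K * r ^ (n + 1) := by ring

lemma sum_Icc_sub_mul_le (hr0 : 0 ≤ r) (hr1 : r < 1) (hbK : 0 ≤ b K)
    (hstep : ∀ i, K ≤ i → i < m → b (i + 1) ≤ r * b i) :
    ∑ i ∈ Icc K m, ((i : ℝ) - K) * b i ≤ b K * (r / (1 - r) ^ 2) := by
  rw [← Ico_add_one_right_eq_Icc, sum_Ico_eq_sum_range]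
  calc ∑ j ∈ range (m + 1 - K), (((K + j : ℕ) : ℝ) - K) * b (K + j)
      ≤ ∑ j ∈ range (m + 1 - K), b K * ((j : ℝ) * r ^ j) := by
        refine sum_le_sum fun j hj => ?_
        have hjm : K + j ≤ m := by rw [mem_range] at hj; omega
        calc (((K + j : ℕ) : ℝ) - K) * b (K + j) = j * b (K + j) := by push_cast; ring
          _ ≤ j * (b K * r ^ j) :=
            mul_le_mul_of_nonneg_left (le_mul_pow_of_succ_le hr0 hstep hjm) (by positivity)
          _ = b K * (j * r ^ j) := by ring
    _ = b K * ∑ j ∈ range (m + 1 - K), (j : ℝ) * r ^ j := by rw [mul_sum]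
    _ ≤ b K * (r / (1 - r) ^ 2) :=
        mul_le_mul_of_nonneg_left (sum_range_mul_pow_le hr0 hr1 _) hbK

lemma sum_Icc_mul_div_sum_le (hb : ∀ i, 0 ≤ b i) (hr0 : 0 ≤ r) (hr1 : r < 1)
    (hstep : ∀ i, K ≤ i → i < m → b (i + 1) ≤ r * b i) :
    (∑ i ∈ Icc K m, b i * i) / ∑ i ∈ Icc K m, b i ≤ K + r / (1 - r) ^ 2 := by
  rcases (sum_nonneg fun i _ => hb i : 0 ≤ ∑ i ∈ Icc K m, b i).eq_or_lt with hden | hden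
  · rw [← hden, div_zero]
    positivity
  have hKm : K ≤ m := by
    obtain ⟨i, hi⟩ := nonempty_of_sum_ne_zero hden.ne'
    exact (mem_Icc.1 hi).1.trans (mem_Icc.1 hi).2
  have hbK : b K ≤ ∑ i ∈ Icc K m, b i :=
    single_le_sum (fun i _ => hb i) (mem_Icc.2 ⟨le_rfl, hKm⟩)
  have hsplit : ∑ i ∈ Icc K m, b i * i
      = K * ∑ i ∈ Icc K m, b i + ∑ i ∈ Icc K m, ((i : ℝ) - K) * b i := by
    rw [mul_sum, ← sum_add_distrib]
    exact sum_congr rfl fun i _ => by ring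
  rw [div_le_iff₀ hden, hsplit, add_mul, mul_comm (K : ℝ)]
  gcongr
  calc ∑ i ∈ Icc K m, ((i : ℝ) - K) * b i ≤ b K * (r / (1 - r) ^ 2) :=
        sum_Icc_sub_mul_le hr0 hr1 (hb K) hstep
    _ ≤ (∑ i ∈ Icc K m, b i) * (r / (1 - r) ^ 2) := by
        gcongr
    _ = r / (1 - r) ^ 2 * ∑ i ∈ Icc K m, b i := mul_comm _ _

end GeometricDecay

section Binomial

def binomTerm (p : ℝ) (m i : ℕ) : ℝ := (m.choose i : ℝ) * p ^ i * (1 - p) ^ (m - i)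

variable {p : ℝ} {m : ℕ}

lemma binomTerm_nonneg (hp0 : 0 ≤ p) (hp1 : p ≤ 1) (i : ℕ) : 0 ≤ binomTerm p m i := by
  have : 0 ≤ 1 - p := by linarith
  unfold binomTerm
  positivity

lemma binomTerm_succ_mul {i : ℕ} (hi : i < m) :
    binomTerm p m (i + 1) * ((1 - p) * (i + 1)) = binomTerm p m i * (p * (m - i)) := by
  have hchoose : (m.choose (i + 1) : ℝ) * (i + 1) = m.choose i * ((m : ℝ) - i) := by
    rw [← Nat.cast_sub hi.le]
    exact_mod_cast Nat.choose_succ_right_eq m i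
  have hexp : m - i = m - (i + 1) + 1 := by omega
  unfold binomTerm
  rw [hexp, pow_succ, pow_succ]
  linear_combination p ^ i * p * (1 - p) ^ (m - (i + 1)) * (1 - p) * hchoose

lemma binomTerm_succ_le (hp0 : 0 ≤ p) (hp1 : p < 1) {K i : ℕ} (hKi : K ≤ i) (him : i < m) :
    binomTerm p m (i + 1) ≤ p * (m - K) / ((1 - p) * (K + 1)) * binomTerm p m i := by
  have hq : 0 < 1 - p := by linarith
  have hKiR : (K : ℝ) ≤ i := by exact_mod_cast hKi
  have himR : (i : ℝ) < m := by exact_mod_cast him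
  have hratio : ((m : ℝ) - i) * (K + 1) ≤ (m - K) * (i + 1) := by nlinarith
  have hb := binomTerm_nonneg hp0 hp1.le (m := m) i
  rw [div_mul_eq_mul_div, le_div_iff₀ (by positivity),
    ← mul_le_mul_iff_of_pos_right (show (0 : ℝ) < i + 1 by positivity)]
  calc binomTerm p m (i + 1) * ((1 - p) * (K + 1)) * (i + 1)
      = binomTerm p m (i + 1) * ((1 - p) * (i + 1)) * (K + 1) := by ring
    _ = binomTerm p m i * p * (((m : ℝ) - i) * (K + 1)) := by
        rw [binomTerm_succ_mul him]; ring
    _ ≤ binomTerm p m i * p * ((m - K) * (i + 1)) := by gcongr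
    _ = p * (m - K) * binomTerm p m i * (i + 1) := by ring

lemma binomTerm_tail_mean_le (hp0 : 0 ≤ p) (hp1 : p < 1) {K : ℕ} (hKm : K ≤ m)
    (hK : p * (m + 1) < K + 1) :
    (∑ i ∈ Icc K m, binomTerm p m i * i) / ∑ i ∈ Icc K m, binomTerm p m i
      ≤ K + ((1 - p) * (K + 1) / (K + 1 - p * (m + 1))) ^ 2 := by
  have hq : 0 < 1 - p := by linarith
  have hKmR : (K : ℝ) ≤ m := by exact_mod_cast hKm
  set r := p * (m - K) / ((1 - p) * (K + 1)) with hr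
  have hr0 : 0 ≤ r := div_nonneg (mul_nonneg hp0 (by linarith)) (by positivity)
  have hsub : 1 - r = (K + 1 - p * (m + 1)) / ((1 - p) * (K + 1)) := by
    rw [hr]; field_simp; ring
  have hsubpos : 0 < 1 - r := by
    rw [hsub]; exact div_pos (by linarith) (by positivity)
  have hr1 : r ≤ 1 := by linarith
  refine (sum_Icc_mul_div_sum_le (binomTerm_nonneg hp0 hp1.le) hr0 (by linarith)
    fun i hKi him => binomTerm_succ_le hp0 hp1 hKi him).trans ?_
  calc (K : ℝ) + r / (1 - r) ^ 2 ≤ K + 1 / (1 - r) ^ 2 := by gcongr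
    _ = K + ((1 - p) * (K + 1) / (K + 1 - p * (m + 1))) ^ 2 := by
        rw [hsub, one_div, ← inv_pow, inv_div]

end Binomial

theorem stmt7 (p : ℝ) (hp : 0 < p) (hp2 : p < 1 / 2) :
    ∃ N : ℕ, ∀ m : ℕ, N ≤ m →
      (∑ i ∈ Finset.Icc (⌈p * m + (m : ℝ) ^ ((3 : ℝ) / 4)⌉₊) m,
          (m.choose i : ℝ) * p ^ i * (1 - p) ^ (m - i) * i) /
        (∑ i ∈ Finset.Icc (⌈p * m + (m : ℝ) ^ ((3 : ℝ) / 4)⌉₊) m,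
          (m.choose i : ℝ) * p ^ i * (1 - p) ^ (m - i)) <
      2 * m * p := by
  obtain ⟨N, hN⟩ := exists_nat_gt ((3 / p) ^ 4)
  refine ⟨N, fun m hm => ?_⟩
  set s := (m : ℝ) ^ ((1 : ℝ) / 4)
  have hm4 : (m : ℝ) = s ^ 4 := by
    rw [← Real.rpow_mul_natCast (Nat.cast_nonneg m)]; norm_num
  have hq3 : (m : ℝ) ^ ((3 : ℝ) / 4) = s ^ 3 := by
    rw [← Real.rpow_mul_natCast (Nat.cast_nonneg m)]; norm_num
  have hs : 3 / p < s := by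
    refine (pow_lt_pow_iff_left₀ (by positivity) (by positivity) (by norm_num : 4 ≠ 0)).1 ?_
    rw [← hm4]; exact hN.trans_le (by exact_mod_cast hm)
  have hs1 : 1 ≤ s := by
    have : 1 < 3 / p := by rw [lt_div_iff₀ hp]; linarith
    linarith
  have hps : 3 < p * s := by rwa [div_lt_iff₀ hp, mul_comm] at hs
  have hbig : 3 * s ^ 3 < p * s ^ 4 := by nlinarith [pow_pos (by linarith : (0 : ℝ) < s) 3]
  rw [hq3]
  set K := ⌈p * m + s ^ 3⌉₊
  have hKge : p * m + s ^ 3 ≤ K := Nat.le_ceil _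
  have hKlt : (K : ℝ) < p * m + s ^ 3 + 1 := Nat.ceil_lt_add_one (by positivity)
  have hs2 : s ^ 2 ≤ s ^ 3 := pow_le_pow_right₀ hs1 (by norm_num)
  have hs3 : 1 ≤ s ^ 3 := one_le_pow₀ hs1
  have hKm : (K : ℝ) + 1 ≤ m := by nlinarith
  have hgap : s ^ 3 ≤ K + 1 - p * (m + 1) := by linarith
  have hexcess : (1 - p) * (K + 1) / (K + 1 - p * (m + 1)) ≤ s := by
    rw [div_le_iff₀ (by linarith)]
    nlinarith
  calc _ ≤ (K : ℝ) + ((1 - p) * (K + 1) / (K + 1 - p * (m + 1))) ^ 2 :=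
        binomTerm_tail_mean_le hp.le (by linarith) (Nat.cast_le.1 (by linarith : (K : ℝ) ≤ m)) (by linarith)
    _ ≤ K + s ^ 2 := by
        gcongr
        exact div_nonneg (by nlinarith) (by linarith)
    _ < 2 * m * p := by nlinarith
end

section
/- Let X be a Binomial(m,p) random variable with p ∈ (0,1/2). There exists N such that for all m ≥ N and all integers k with pm ≤ k ≤ pm + m^{3/4} + 1, P(X ≥ k+1) > P(X = k). -/
/-!
The ratio `P(X = j + 1) / P(X = j) = ((m - j) / (j + 1)) * (p / (1 - p))` is at least `3 / 4` for
`j = k` and `j = k + 1`, because `k + 2 ≤ p m + m ^ (3 / 4) + 3` is at most `(9 / 8) p m` for large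
`m`. Hence `P(X ≥ k + 1) ≥ P(X = k + 1) + P(X = k + 2) ≥ (3 / 4 + 9 / 16) P(X = k) > P(X = k)`.
-/

open Finset Filter Asymptotics

def binomialMass (m : ℕ) (p : ℝ) (i : ℕ) : ℝ :=
  m.choose i * p ^ i * (1 - p) ^ (m - i)

section binomialMass

variable {m : ℕ} {p : ℝ}

lemma binomialMass_nonneg (hp : 0 ≤ p) (hp1 : p ≤ 1) (i : ℕ) : 0 ≤ binomialMass m p i := by
  unfold binomialMass
  have : 0 ≤ 1 - p := by linarith
  positivity

lemma binomialMass_pos (hp : 0 < p) (hp1 : p < 1) {i : ℕ} (hi : i ≤ m) :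
    0 < binomialMass m p i := by
  unfold binomialMass
  have : 0 < 1 - p := by linarith
  have : (0 : ℝ) < m.choose i := by exact_mod_cast Nat.choose_pos hi
  positivity

lemma binomialMass_succ_mul {j : ℕ} (hj : j < m) :
    binomialMass m p (j + 1) * ((j + 1) * (1 - p)) = binomialMass m p j * ((m - j) * p) := by
  have hchoose : (m.choose (j + 1) : ℝ) * (j + 1) = m.choose j * (m - j) := by
    rw [← Nat.cast_sub hj.le]
    exact_mod_cast Nat.choose_succ_right_eq m j
  have hexp : m - j = m - (j + 1) + 1 := by omega
  unfold binomialMass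
  rw [hexp, pow_succ, pow_succ]
  linear_combination p ^ j * (1 - p) ^ (m - (j + 1)) * p * (1 - p) * hchoose

lemma mul_binomialMass_le_succ (hp : 0 ≤ p) (hp1 : p < 1) {c : ℝ} {j : ℕ} (hj : j < m)
    (h : c * ((j + 1) * (1 - p)) ≤ (m - j) * p) :
    c * binomialMass m p j ≤ binomialMass m p (j + 1) := by
  have hpos : 0 < (j + 1 : ℝ) * (1 - p) := by
    have : 0 < 1 - p := by linarith
    positivity
  rw [← mul_le_mul_iff_of_pos_right hpos, binomialMass_succ_mul hj]
  calc c * binomialMass m p j * ((j + 1) * (1 - p))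
      = binomialMass m p j * (c * ((j + 1) * (1 - p))) := by ring
    _ ≤ binomialMass m p j * ((m - j) * p) :=
      mul_le_mul_of_nonneg_left h (binomialMass_nonneg hp hp1.le j)

lemma binomialMass_lt_sum_Icc (hp : 0 < p) (hp1 : p < 1) {k : ℕ}
    (h : 3 * ((k + 2) * (1 - p)) ≤ 4 * ((m - (k + 1)) * p)) :
    binomialMass m p k < ∑ i ∈ Icc (k + 1) m, binomialMass m p i := by
  have hkm : k + 1 < m := by
    by_contra! hmk
    have : (m : ℝ) ≤ k + 1 := by exact_mod_cast hmk
    nlinarith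
  have hstep₀ : 3 / 4 * binomialMass m p k ≤ binomialMass m p (k + 1) :=
    mul_binomialMass_le_succ hp.le hp1 (by omega) (by nlinarith)
  have hstep₁ : 3 / 4 * binomialMass m p (k + 1) ≤ binomialMass m p (k + 2) :=
    mul_binomialMass_le_succ hp.le hp1 hkm (by push_cast; linarith)
  have hpair : binomialMass m p (k + 1) + binomialMass m p (k + 2) ≤
      ∑ i ∈ Icc (k + 1) m, binomialMass m p i := by
    rw [← sum_pair (show k + 1 ≠ k + 2 by omega)]
    refine sum_le_sum_of_subset_of_nonneg ?_ fun i _ _ => binomialMass_nonneg hp.le hp1.le i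
    intro i hi
    simp only [mem_insert, mem_singleton] at hi
    simp only [mem_Icc]
    omega
  have := binomialMass_pos hp hp1 (m := m) (i := k) (by omega)
  linarith

end binomialMass

lemma isLittleO_rpow_id_atTop {r : ℝ} (hr : r < 1) : (fun x : ℝ => x ^ r) =o[atTop] id := by
  refine (isLittleO_iff_tendsto' ?_).2 ?_
  · filter_upwards [eventually_gt_atTop 0] with x hx h using absurd h hx.ne'
  · have : (fun x : ℝ => x ^ (-(1 - r))) =ᶠ[atTop] fun x => x ^ r / id x := by
      filter_upwards [eventually_gt_atTop 0] with x hx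
      rw [id, ← Real.rpow_sub_one hx.ne']
      ring_nf
    exact (tendsto_rpow_neg_atTop (by linarith)).congr' this

lemma eventually_rpow_add_le_mul {r : ℝ} (hr : r < 1) (c : ℝ) {ε : ℝ} (hε : 0 < ε) :
    ∀ᶠ n : ℕ in atTop, (n : ℝ) ^ r + c ≤ ε * n := by
  have h := ((isLittleO_rpow_id_atTop hr).add (isLittleO_const_id_atTop c)).natCast_atTop
  filter_upwards [h.bound hε] with n hn
  simp only [id, Real.norm_natCast] at hn
  exact (le_abs_self _).trans hn

theorem stmt8 (p : ℝ) (hp : 0 < p) (hp2 : p < 1 / 2) :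
    ∃ N : ℕ, ∀ m : ℕ, N ≤ m → ∀ k : ℕ,
      p * m ≤ k → (k : ℝ) ≤ p * m + (m : ℝ) ^ ((3 : ℝ) / 4) + 1 →
      (∑ i ∈ Finset.Icc (k + 1) m, (m.choose i : ℝ) * p ^ i * (1 - p) ^ (m - i)) >
        (m.choose k : ℝ) * p ^ k * (1 - p) ^ (m - k) := by
  obtain ⟨N, hN⟩ := eventually_atTop.1 <|
    eventually_rpow_add_le_mul (r := 3 / 4) (by norm_num) 3 (ε := p / 8) (by positivity)
  refine ⟨N, fun m hm k _ hk => binomialMass_lt_sum_Icc hp (by linarith) ?_⟩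
  have hk₂ : (k : ℝ) + 2 ≤ (p + p / 8) * m := by linarith [hN m hm]
  -- `3 (1 - p) (k + 2) + 4 p (k + 1) ≤ (3 + p) (k + 2) ≤ (3 + p) (9 / 8) p m ≤ 4 p m` as `p ≤ 5 / 9`
  nlinarith [mul_le_mul_of_nonneg_left hk₂ (by linarith : (0 : ℝ) ≤ 3 + p),
    mul_nonneg (mul_nonneg hp.le (by linarith : (0 : ℝ) ≤ 5 / 9 - p)) m.cast_nonneg]
end

section
/- Let n and k be integers with 12 ≤ k ≤ n and n ≥ 22. For all x ∈ (0,1], the function f(x) = (Σ_{i=1}^{k} x^i/i − x^k)/(Σ_{i=1}^{n} x^i/i) satisfies f(x) ≥ 1 − (1 + ln(n−1) − ln k)/ln(k+1). -/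
/-!
Write `W m x = ∑_{i ≤ m} x ^ i / i`. For `0 < x ≤ 1` the terms compare with those of the
harmonic numbers: `x ^ k * H k ≤ W k x` and `W n x - W k x ≤ x ^ k * (H n - H k)`, whence
`f x ≥ 1 - (1 + H n - H k) / H k`. The two monotone Euler–Mascheroni sequences give
`H k ≥ log (k + 1) + 1 / 2` for `k ≥ 6` and `H n - H k ≤ log n - log k`; the remaining gap
`log n - log (n - 1) ≤ 1 / (n - 1)` is absorbed by the `1 / 2` as soon as
`2 log (n + 1) ≤ n - 2`.
-/

open Finset Real

theorem Finset.sum_Icc_one_add_sum_Ioc {M : Type*} [AddCommMonoid M] (f : ℕ → M) {k n : ℕ}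
    (hkn : k ≤ n) : ∑ i ∈ Icc 1 k, f i + ∑ i ∈ Ioc k n, f i = ∑ i ∈ Icc 1 n, f i := by
  rw [show Icc 1 k = Ioc 0 k from Icc_add_one_left_eq_Ioc 0 k,
    show Icc 1 n = Ioc 0 n from Icc_add_one_left_eq_Ioc 0 n]
  exact sum_Ioc_consecutive f (Nat.zero_le k) hkn

theorem harmonic_sub_harmonic_eq_sum_Ioc {k n : ℕ} (hkn : k ≤ n) :
    harmonic n - harmonic k = ∑ i ∈ Ioc k n, (i : ℚ)⁻¹ := by
  rw [harmonic_eq_sum_Icc, harmonic_eq_sum_Icc, ← sum_Icc_one_add_sum_Ioc _ hkn,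
    add_sub_cancel_left]

theorem harmonic_sub_harmonic_le_log_sub_log {k n : ℕ} (hk : 1 ≤ k) (hkn : k ≤ n) :
    (harmonic n : ℝ) - harmonic k ≤ log n - log k := by
  have := strictAnti_eulerMascheroniSeq'.antitone hkn
  simp only [eulerMascheroniSeq', if_neg (by omega : k ≠ 0), if_neg (by omega : n ≠ 0)] at this
  linarith

theorem log_add_one_add_half_lt_harmonic {k : ℕ} (hk : 6 ≤ k) :
    log (k + 1) + 1 / 2 < harmonic k := by
  have := one_half_lt_eulerMascheroniSeq_six.trans_le (strictMono_eulerMascheroniSeq.monotone hk)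
  rw [eulerMascheroniSeq] at this
  linarith

theorem two_mul_log_add_one_le_sub_two {x : ℝ} (hx : 7 ≤ x) : 2 * log (x + 1) ≤ x - 2 := by
  have h : log ((x + 1) / 4) ≤ (x + 1) / 4 - 1 := log_le_sub_one_of_pos (by positivity)
  rw [log_div (by positivity) (by norm_num), show (4 : ℝ) = 2 ^ 2 by norm_num, log_pow] at h
  linarith [log_two_lt_d9]

theorem pow_mul_harmonic_le_sum_pow_div {x : ℝ} (hx0 : 0 ≤ x) (hx1 : x ≤ 1) (k : ℕ) :
    x ^ k * harmonic k ≤ ∑ i ∈ Icc 1 k, x ^ i / i := by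
  rw [harmonic_eq_sum_Icc, Rat.cast_sum, mul_sum]
  gcongr with i hi
  rw [Rat.cast_inv, Rat.cast_natCast, ← div_eq_mul_inv]
  exact div_le_div_of_nonneg_right (pow_le_pow_of_le_one hx0 hx1 (mem_Icc.1 hi).2) i.cast_nonneg

theorem sum_Ioc_pow_div_le {x : ℝ} (hx0 : 0 ≤ x) (hx1 : x ≤ 1) {k n : ℕ} (hkn : k ≤ n) :
    ∑ i ∈ Ioc k n, x ^ i / i ≤ x ^ k * (harmonic n - harmonic k) := by
  rw [← Rat.cast_sub, harmonic_sub_harmonic_eq_sum_Ioc hkn, Rat.cast_sum, mul_sum]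
  gcongr with i hi
  rw [Rat.cast_inv, Rat.cast_natCast, ← div_eq_mul_inv]
  exact div_le_div_of_nonneg_right (pow_le_pow_of_le_one hx0 hx1 (mem_Ioc.1 hi).1.le) i.cast_nonneg

theorem one_sub_div_le_sub_div_add {c h s t w : ℝ} (hc : 0 < c) (hh : 0 < h) (hs : 0 ≤ s)
    (hcw : c * h ≤ w) (ht : 0 ≤ t) (htc : t ≤ c * s) :
    1 - (1 + s) / h ≤ (w - c) / (w + t) := by
  have hwt : 0 < w + t := by nlinarith
  rw [sub_le_comm, one_sub_div hwt.ne', show w + t - (w - c) = t + c by ring,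
    div_le_div_iff₀ hwt hh]
  calc (t + c) * h ≤ (c * s + c) * h := by gcongr
    _ = (1 + s) * (c * h) := by ring
    _ ≤ (1 + s) * (w + t) := by gcongr; linarith

theorem one_sub_div_harmonic_le {k n : ℕ} (hk : 1 ≤ k) (hkn : k ≤ n) {x : ℝ}
    (hx : x ∈ Set.Ioc 0 1) :
    1 - (1 + (harmonic n - harmonic k : ℝ)) / harmonic k ≤
      ((∑ i ∈ Icc 1 k, x ^ i / i) - x ^ k) / ∑ i ∈ Icc 1 n, x ^ i / i := by
  obtain ⟨hx0, hx1⟩ := hx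
  have hH : (0 : ℝ) < harmonic k := by exact_mod_cast harmonic_pos (by omega)
  have hHk : (0 : ℝ) ≤ harmonic n - harmonic k := by
    rw [← Rat.cast_sub, harmonic_sub_harmonic_eq_sum_Ioc hkn]
    positivity
  have hWk := pow_mul_harmonic_le_sum_pow_div hx0.le hx1 k
  rw [← sum_Icc_one_add_sum_Ioc _ hkn]
  exact one_sub_div_le_sub_div_add (by positivity) hH hHk hWk
    (sum_nonneg fun i _ ↦ by positivity) (sum_Ioc_pow_div_le hx0.le hx1 hkn)

theorem one_add_harmonic_sub_div_harmonic_le {k n : ℕ} (hk : 6 ≤ k) (hkn : k ≤ n)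
    (hn : 7 ≤ n) :
    (1 + (harmonic n - harmonic k : ℝ)) / harmonic k ≤
      (1 + log ((n : ℝ) - 1) - log k) / log (k + 1) := by
  set a := log ((k : ℝ) + 1)
  set d := 1 + log ((n : ℝ) - 1) - log k
  set δ := log n - log ((n : ℝ) - 1)
  have hnR : (7 : ℝ) ≤ n := by exact_mod_cast hn
  have hkR : (6 : ℝ) ≤ k := by exact_mod_cast hk
  have hknR : (k : ℝ) ≤ n := by exact_mod_cast hkn
  have ha : 0 < a := log_pos (by linarith)
  have hH : a + 1 / 2 < harmonic k := log_add_one_add_half_lt_harmonic hk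
  have htail := harmonic_sub_harmonic_le_log_sub_log (by omega) hkn
  have hn1 : (0 : ℝ) < n - 1 := by linarith
  have hδ : δ ≤ 1 / ((n : ℝ) - 1) := by
    have := log_le_sub_one_of_pos (div_pos (by linarith : (0 : ℝ) < n) hn1)
    rwa [log_div (by positivity) hn1.ne', div_sub_one hn1.ne', sub_sub_cancel] at this
  have hδ0 : 0 ≤ δ := sub_nonneg.2 (log_le_log (by linarith) (by linarith))
  have hd : 1 - δ ≤ d := by linarith [log_le_log (by linarith : (0 : ℝ) < k) hknR]
  have hak : a ≤ log ((n : ℝ) + 1) := log_le_log (by positivity) (by linarith)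
  have hkey : a * δ ≤ d / 2 := calc
    a * δ ≤ log ((n : ℝ) + 1) * (1 / ((n : ℝ) - 1)) :=
      mul_le_mul hak hδ hδ0 (log_nonneg (by linarith))
    _ ≤ (1 - 1 / ((n : ℝ) - 1)) / 2 := by
      have := two_mul_log_add_one_le_sub_two (by linarith : (7 : ℝ) ≤ n)
      rw [mul_one_div, one_sub_div hn1.ne', div_div, div_le_div_iff₀ hn1 (by linarith)]
      nlinarith
    _ ≤ d / 2 := by linarith
  have hd0 : 0 ≤ d := by nlinarith
  rw [div_le_div_iff₀ (by linarith) ha]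
  calc (1 + (harmonic n - harmonic k : ℝ)) * a ≤ (d + δ) * a :=
      mul_le_mul_of_nonneg_right (by linarith) ha.le
    _ ≤ d * (a + 1 / 2) := by linarith
    _ ≤ d * harmonic k := by gcongr

theorem stmt12 (n k : ℕ) (hk : 12 ≤ k) (hkn : k ≤ n) (hn : 22 ≤ n) :
    ∀ x ∈ Set.Ioc (0 : ℝ) 1,
      ((∑ i ∈ Finset.Icc 1 k, x ^ i / i) - x ^ k) /
          (∑ i ∈ Finset.Icc 1 n, x ^ i / i) ≥
        1 - (1 + Real.log ((n : ℝ) - 1) - Real.log k) / Real.log (k + 1) := fun x hx ↦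
  (sub_le_sub_left (one_add_harmonic_sub_div_harmonic_le (by omega) hkn (by omega)) 1).trans
    (one_sub_div_harmonic_le (by omega) hkn hx)
end
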